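/- arXiv:2509.00436 — 2 statements merged into one kernel-verified Lean document; each statement's English description precedes it below -/
import Mathlib

section
/- For every n ≥ 1, the map θ sending p ∈ PK(n) to the nondecreasing rearrangement of the concatenation of p with the list of all j ∈ {1,…,mn−m+1} satisfying j ≢ 1 (mod m) is a bijection from PK(n) onto PKcat(n), the set of parking distributions on the m-caterpillar of length n. -/
open scoped Classical
open Finset

noncomputable section

/-- The set of positive nondecreasing sequences of length `n` bounded above by `b` is finite. -/
lemma boundedSeq_finite (n : ℕ) (b : ℕ → ℕ) :
    {p : Fin n → ℕ | Monotone p ∧ ∀ i : Fin n, 1 ≤ p i ∧ p i ≤ b i}.Finite := by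
  have h : {p : Fin n → ℕ | Monotone p ∧ ∀ i : Fin n, 1 ≤ p i ∧ p i ≤ b i} ⊆
      Set.pi Set.univ (fun i : Fin n => Set.Iic (b i)) := by
    intro p hp
    rw [Set.mem_pi]
    intro i _
    exact (hp.2 i).2
  exact (Set.Finite.pi fun i : Fin n => Set.finite_Iic (b (i : ℕ))).subset h

/-- The finset of nondecreasing sequences `p : Fin n → ℕ` of positive integers
with `p i ≤ b i` for all `i`. -/
def BSeq (n : ℕ) (b : ℕ → ℕ) : Finset (Fin n → ℕ) := (boundedSeq_finite n b).toFinset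

/-- `PK m n` : the u-parking distributions of length `n`, i.e. nondecreasing sequences
of positive integers with `p i ≤ m*(i-1)+1` (here indexed from `0`, so `p i ≤ m*i+1`). -/
def PK (m n : ℕ) : Finset (Fin n → ℕ) := BSeq n (fun i => m * i + 1)

/-- `luck p` : the number of indices `i` with `p i = m*(i-1)+1` (0-indexed: `m*i+1`). -/
def luck (m : ℕ) {n : ℕ} (p : Fin n → ℕ) : ℕ :=
  (Finset.univ.filter (fun i : Fin n => p i = m * (i : ℕ) + 1)).card

/-- `freq j p` = `ω_j(p)` : the number of indices `i` with `p i = j`. -/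
def freq (j : ℕ) {n : ℕ} (p : Fin n → ℕ) : ℕ :=
  (Finset.univ.filter (fun i : Fin n => p i = j)).card

/-- `hcnt m n k r` = `h_{n,k,r}` : the number of nondecreasing sequences of positive
integers with `p_i ≤ m*(i+k-1) - r` for `1 ≤ i ≤ n` (0-indexed: `p i ≤ m*(i+k) - r`). -/
def hcnt (m n k r : ℕ) : ℕ := (BSeq n (fun i => m * (i + k) - r)).card

/-- `Cnt m n k` = `C_{n,k}` : the number of `p ∈ PK m n` with `luck p = k`. -/
def Cnt (m n k : ℕ) : ℕ := ((PK m n).filter (fun p => luck m p = k)).card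

/-- `Rpoly m n` = `R_n(q) = Σ_k C_{n,k} q^k ∈ ℤ[q]`. -/
def Rpoly (m n : ℕ) : Polynomial ℤ :=
  ∑ k ∈ Finset.range (n + 1), (Cnt m n k : Polynomial ℤ) * Polynomial.X ^ k

/-- `hfull t k` : the complete homogeneous symmetric polynomial of degree `k`
in variables `q_0, …, q_{t-1}`, i.e. the sum of all monomials of total degree `k`. -/
def hfull (t k : ℕ) : MvPolynomial (Fin t) ℤ :=
  ∑ α ∈ Finset.Nat.antidiagonalTuple t k, ∏ i : Fin t, MvPolynomial.X i ^ α i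

/-- `ffix m p ℓ` = `i_ℓ(p)` : the first fixed point of type `ℓ`, the smallest `k` with
`2 ≤ k ≤ n` and `p_k ≥ m*(k-2)+1+ℓ` (1-indexed), or `n+1` if there is none. -/
def ffix (m : ℕ) {n : ℕ} (p : Fin n → ℕ) (ℓ : ℕ) : ℕ :=
  sInf ({k | 2 ≤ k ∧ ∃ i : Fin n, (i : ℕ) + 1 = k ∧ m * (k - 2) + 1 + ℓ ≤ p i} ∪ {n + 1})

/-- The extended first fixed points: `i_0 = 2`, `i_{m+1} = n+1`, and `i_ℓ = ffix m p ℓ`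
for `1 ≤ ℓ ≤ m`. -/
def ffixE (m : ℕ) {n : ℕ} (p : Fin n → ℕ) (j : ℕ) : ℕ :=
  if j = 0 then 2 else if j = m + 1 then n + 1 else ffix m p j

/-- `pget p k` = `p_k` (1-indexed), `0` out of range. -/
def pget {n : ℕ} (p : Fin n → ℕ) (k : ℕ) : ℕ := if h : k - 1 < n then p ⟨k - 1, h⟩ else 0

/-- The `(ℓ+1)`-st part `P_{ℓ+1}` (for `0 ≤ ℓ ≤ m`) of the first-return decomposition of `p`:
the list `(p_k - (p_{i_ℓ} - 1))` for `i_ℓ ≤ k ≤ i_{ℓ+1} - 1`. -/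
def FRD (m : ℕ) {n : ℕ} (p : Fin n → ℕ) (ℓ : ℕ) : List ℕ :=
  (List.range (ffixE m p (ℓ + 1) - ffixE m p ℓ)).map
    (fun t => pget p (ffixE m p ℓ + t) - (pget p (ffixE m p ℓ) - 1))

/-- A list is a u-parking distribution: nondecreasing, with `l.get i ∈ [1, m*i+1]`
(0-indexed). -/
def isPKlist (m : ℕ) (l : List ℕ) : Prop :=
  l.Pairwise (· ≤ ·) ∧ ∀ i : Fin l.length, 1 ≤ l.get i ∧ l.get i ≤ m * (i : ℕ) + 1

/-- `θ(p)` : the nondecreasing rearrangement of the concatenation of `p` with the list of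
all `j ∈ {1, …, m*n-m+1}` with `j ≢ 1 (mod m)`. -/
def theta (m n : ℕ) (p : Fin n → ℕ) : List ℕ :=
  Multiset.sort
    ((List.ofFn p : Multiset ℕ) +
      ((((List.range (m * n - m + 1)).map (· + 1)).filter
        (fun j => ¬ j ≡ 1 [MOD m]) : List ℕ) : Multiset ℕ)) (· ≤ ·)

/-- Parking distributions on the `m`-caterpillar of length `n`, as nondecreasing lists. -/
def PKcat (m n : ℕ) : Set (List ℕ) :=
  {a | a.length = m * n - m + 1 ∧ a.Pairwise (· ≤ ·) ∧
       (∀ x ∈ a, 1 ≤ x ∧ x ≤ m * n - m + 1) ∧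
       (∀ i : ℕ, 1 ≤ i → i ≤ n →
         m * (i - 1) + 1 ≤ (a.filter (fun x => x ≤ m * (i - 1) + 1)).length) ∧
       (∀ j : ℕ, 1 ≤ j → j ≤ m * n - m + 1 → ¬ j ≡ 1 [MOD m] → j ∈ a)}

/- θ(p) is the sorted rearrangement of `p ++ filler`, where the filler lists the values in
`[1, mn-m+1]` that are `≢ 1 (mod m)`. Exactly `mk - k` filler values are `≤ mk+1`, so the
caterpillar condition at `mk+1` says that at least `k+1` entries of `p` are `≤ mk+1`; for a sorted
`p` this is the u-parking bound on its `k`-th entry (counting from `0`). Conversely, a caterpillar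
parking distribution contains every filler value, and removing them leaves the preimage. -/

theorem List.SortedLE.lt_countP_le_iff {α : Type*} [LinearOrder α] {l : List α}
    (hl : l.SortedLE) (b : α) {i : ℕ} (hi : i < l.length) :
    i < l.countP (fun x => decide (x ≤ b)) ↔ l[i] ≤ b := by
  constructor
  · intro hcount
    by_contra! hb
    have hdrop : (l.drop i).countP (fun x => decide (x ≤ b)) = 0 := by
      refine List.countP_eq_zero.2 fun x hx => ?_
      obtain ⟨j, hj, rfl⟩ := List.mem_iff_getElem.1 hx
      rw [List.getElem_drop, decide_eq_true_iff, not_le]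
      exact hb.trans_le (hl.getElem_le_getElem_of_le (Nat.le_add_right i j))
    have htake := (l.take i).countP_le_length (p := fun x => decide (x ≤ b))
    rw [← l.take_append_drop i, List.countP_append, hdrop] at hcount
    rw [List.length_take] at htake
    omega
  · intro hb
    have htake : (l.take (i + 1)).countP (fun x => decide (x ≤ b)) = i + 1 := by
      rw [List.countP_eq_length.2, List.length_take]
      · omega
      intro x hx
      obtain ⟨j, hj, rfl⟩ := List.mem_iff_getElem.1 hx
      rw [List.length_take] at hj
      rw [List.getElem_take, decide_eq_true_iff]
      exact (hl.getElem_le_getElem_of_le (by omega)).trans hb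
    have := (l.take_sublist (i + 1)).countP_le (p := fun x => decide (x ≤ b))
    omega

theorem Nat.count_dvd_mul_add_one {m : ℕ} (hm : 0 < m) (i : ℕ) :
    Nat.count (m ∣ ·) (m * i + 1) = i + 1 := by
  rw [Nat.count_succ', Nat.count_eq_card_filter_range, Nat.card_multiples,
    Nat.mul_div_cancel_left i hm, if_pos (dvd_zero m)]

def filler (m n : ℕ) : List ℕ :=
  ((List.range (m * n - m + 1)).map (· + 1)).filter (fun j => ¬ j ≡ 1 [MOD m])

theorem theta_perm (m n : ℕ) (p : Fin n → ℕ) : (theta m n p).Perm (List.ofFn p ++ filler m n) :=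
  Multiset.coe_eq_coe.1 (Multiset.sort_eq _ _)

theorem sortedLE_theta (m n : ℕ) (p : Fin n → ℕ) : (theta m n p).SortedLE :=
  (Multiset.pairwise_sort _ _).sortedLE

theorem mem_filler {m n j : ℕ} :
    j ∈ filler m n ↔ 1 ≤ j ∧ j ≤ m * n - m + 1 ∧ ¬ j ≡ 1 [MOD m] := by
  simp only [filler, List.mem_filter, List.mem_map, List.mem_range, decide_eq_true_eq]
  constructor
  · rintro ⟨⟨e, he, rfl⟩, hj⟩
    exact ⟨by omega, by omega, hj⟩
  · rintro ⟨h1, h2, hj⟩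
    exact ⟨⟨j - 1, by omega, by omega⟩, hj⟩

theorem nodup_filler (m n : ℕ) : (filler m n).Nodup :=
  (List.nodup_range.map (add_left_injective 1)).filter _

theorem filter_filler_le {m n k : ℕ} (hk : k < n) :
    (filler m n).filter (fun j => decide (j ≤ m * k + 1)) = filler m (k + 1) := by
  have hmk : m * (k + 1) ≤ m * n := Nat.mul_le_mul_left m hk
  have hsplit : m * n - m + 1 = (m * k + 1) + (m * n - m - m * k) := by
    rw [Nat.mul_succ] at hmk; omega
  have hsucc : m * (k + 1) - m + 1 = m * k + 1 := by rw [Nat.mul_succ]; omega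
  have hprefix : ((List.range (m * n - m + 1)).map (· + 1)).filter
      (fun j => decide (j ≤ m * k + 1)) = (List.range (m * k + 1)).map (· + 1) := by
    rw [hsplit, List.range_add, List.map_append, List.filter_append,
      List.filter_eq_self.2, List.filter_eq_nil_iff.2, List.append_nil]
    · simp only [List.map_map, List.mem_map, List.mem_range]
      rintro _ ⟨e, -, rfl⟩
      simp only [Function.comp_apply, decide_eq_true_eq, not_le]
      omega
    · simp only [List.mem_map, List.mem_range]
      rintro _ ⟨e, he, rfl⟩
      simpa using he
  rw [filler, filler, List.filter_comm, hprefix, hsucc]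

theorem length_filler_add {m : ℕ} (hm : 0 < m) (k : ℕ) :
    (filler m (k + 1)).length + (k + 1) = m * k + 1 := by
  have hsucc : m * (k + 1) - m + 1 = m * k + 1 := by rw [Nat.mul_succ]; omega
  have hcount := (List.range (m * k + 1)).length_eq_countP_add_countP (fun e => decide (m ∣ e))
  rw [List.length_range, ← Nat.count, Nat.count_dvd_mul_add_one hm] at hcount
  simp only [decide_eq_true_eq] at hcount
  rw [filler, hsucc, ← List.countP_eq_length_filter, List.countP_map]
  simp only [Function.comp_def, Nat.add_modEq_right_iff]
  omega

theorem caterpillar_condition_iff {m n : ℕ} (hm : 0 < m) {a x : List ℕ} (hx : x.SortedLE)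
    (hlen : x.length = n) (hperm : a.Perm (x ++ filler m n)) :
    (∀ i : ℕ, 1 ≤ i → i ≤ n →
        m * (i - 1) + 1 ≤ (a.filter (fun y => y ≤ m * (i - 1) + 1)).length) ↔
      ∀ (i : ℕ) (hi : i < x.length), x[i] ≤ m * i + 1 := by
  have key : ∀ (i : ℕ) (hi : i < x.length),
      m * i + 1 ≤ (a.filter (fun y => y ≤ m * i + 1)).length ↔ x[i] ≤ m * i + 1 := by
    intro i hi
    rw [← hx.lt_countP_le_iff _ hi, ← List.countP_eq_length_filter, hperm.countP_eq,
      List.countP_append, List.countP_eq_length_filter (l := filler m n),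
      filter_filler_le (hlen ▸ hi)]
    have := length_filler_add hm i
    omega
  constructor
  · intro h i hi
    simpa using (key i hi).1 (h (i + 1) (by omega) (by omega))
  · intro h i hi₁ hi₂
    obtain ⟨k, rfl⟩ : ∃ k, i = k + 1 := ⟨i - 1, by omega⟩
    simpa using (key k (by omega)).2 (h k (by omega))

theorem mem_PK {m n : ℕ} {p : Fin n → ℕ} :
    p ∈ PK m n ↔ Monotone p ∧ ∀ i : Fin n, 1 ≤ p i ∧ p i ≤ m * i + 1 :=
  Set.Finite.mem_toFinset _

theorem theta_mem_PKcat {m n : ℕ} (hm : 0 < m) (hn : 0 < n) {p : Fin n → ℕ}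
    (hp : p ∈ PK m n) : theta m n p ∈ PKcat m n := by
  obtain ⟨hmono, hbounds⟩ := mem_PK.1 hp
  have hperm := theta_perm m n p
  obtain ⟨k, rfl⟩ : ∃ k, n = k + 1 := ⟨n - 1, by omega⟩
  have hN : m * (k + 1) - m + 1 = m * k + 1 := by rw [Nat.mul_succ]; omega
  refine ⟨?_, (sortedLE_theta m _ p).pairwise, ?_, ?_, ?_⟩
  · rw [hperm.length_eq, List.length_append, List.length_ofFn, hN]
    have := length_filler_add hm k
    omega
  · intro y hy
    rcases List.mem_append.1 (hperm.mem_iff.1 hy) with hy | hy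
    · obtain ⟨i, rfl⟩ := List.mem_ofFn.1 hy
      have := Nat.mul_le_mul_left m (Nat.le_of_lt_succ i.2)
      have := hbounds i
      omega
    · exact ⟨(mem_filler.1 hy).1, (mem_filler.1 hy).2.1⟩
  · refine (caterpillar_condition_iff hm hmono.sortedLE_ofFn List.length_ofFn hperm).2 ?_
    intro i hi
    rw [List.getElem_ofFn]
    exact (hbounds _).2
  · intro j hj₁ hj₂ hj
    exact hperm.mem_iff.2 (List.mem_append_right _ (mem_filler.2 ⟨hj₁, hj₂, hj⟩))

theorem theta_injOn (m n : ℕ) : Set.InjOn (theta m n) (PK m n) := by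
  intro p hp q hq h
  have hperm : (List.ofFn p).Perm (List.ofFn q) :=
    List.perm_append_right_iff _ |>.1 <| (theta_perm m n p).symm.trans (h ▸ theta_perm m n q)
  exact List.ofFn_injective <|
    hperm.eq_of_sortedLE (mem_PK.1 hp).1.sortedLE_ofFn (mem_PK.1 hq).1.sortedLE_ofFn

theorem theta_surjOn {m n : ℕ} (hm : 0 < m) (hn : 0 < n) :
    Set.SurjOn (theta m n) (PK m n) (PKcat m n) := by
  rintro a ⟨hlen, hsorted, hbounds, hcount, hfilled⟩
  obtain ⟨f, hf, hfa⟩ : (filler m n).Subperm a :=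
    List.subperm_of_subset (nodup_filler m n) fun j hj =>
      hfilled j (mem_filler.1 hj).1 (mem_filler.1 hj).2.1 (mem_filler.1 hj).2.2
  obtain ⟨x, hax⟩ := hfa.exists_perm_append
  obtain ⟨y, hy, hyx⟩ : ∃ y : List ℕ, y.SortedLE ∧ y.Perm x :=
    ⟨_, List.sortedLE_mergeSort, x.mergeSort_perm _⟩
  have hay : a.Perm (y ++ filler m n) :=
    hax.trans ((hf.append hyx.symm).trans List.perm_append_comm)
  have hylen : y.length = n := by
    obtain ⟨k, rfl⟩ : ∃ k, n = k + 1 := ⟨n - 1, by omega⟩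
    have := length_filler_add hm k
    have := hay.length_eq
    rw [List.length_append, hlen, Nat.mul_succ] at this
    omega
  have hofFn : List.ofFn (fun i : Fin n => y[i.1]) = y :=
    List.ext_getElem (by simp [hylen]) (by simp)
  refine ⟨fun i => y[i.1], mem_PK.2 ⟨fun i j hij => hy.getElem_le_getElem_of_le hij,
    fun i => ⟨(hbounds _ (hay.mem_iff.2 (List.mem_append_left _ (List.getElem_mem _)))).1, ?_⟩⟩, ?_⟩
  · exact (caterpillar_condition_iff hm hy hylen hay).1 hcount i (by omega)
  · refine List.Perm.eq_of_sortedLE (sortedLE_theta m n _) hsorted.sortedLE ?_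
    rw [← hofFn] at hay
    exact (theta_perm m n _).trans hay.symm

theorem stmt1 (m : ℕ) (hm : 1 ≤ m) (n : ℕ) (hn : 1 ≤ n) :
    Set.BijOn (theta m n) (↑(PK m n)) (PKcat m n) :=
  ⟨fun _ hp => theta_mem_PKcat hm hn hp, theta_injOn m n, theta_surjOn hm hn⟩
end
end

section
/- The statistics luck and ω_1 have a symmetric joint distribution on PK(n): for all n ≥ 0 and all a, b ≥ 0, #{p ∈ PK(n) : luck(p) = a and ω_1(p) = b} = #{p ∈ PK(n) : luck(p) = b and ω_1(p) = a}. -/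
/-!
Let `N(a, b)` count the `p ∈ PK(n)` with `luck p = a` and `ω₁ p = b`. Since `p₁ = 1` is always
lucky, both statistics vanish exactly on the empty sequence, so only `a, b ≥ 1` matters. There
`N(a, b + 1) = N(a + 1, b)`: given `p` with two leading `1`s, drop the first one and insert the
lucky value `m t + 1` at the first position `t ≥ 1` (counted from `0`) where the shifted sequence
rises above `k ↦ m k`, or at its end; this turns one `1` into one lucky entry. Conversely, removing
the second lucky entry and prepending a `1` undoes it. Thus `N(a, b)` depends only on `a + b`.
-/

open scoped Classical
open Finset

noncomputable section

open Fin

section Tuples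

variable {α : Type*} [Preorder α] {n : ℕ}

lemma Fin.val_succAbove (t : Fin (n + 1)) (j : Fin n) :
    (t.succAbove j : ℕ) = if (j : ℕ) < t then (j : ℕ) else (j : ℕ) + 1 := by
  unfold succAbove
  split_ifs <;> simp_all [Fin.lt_def]

lemma Fin.monotone_insertNth {g : Fin n → α} (hg : Monotone g) {t : Fin (n + 1)} {x : α}
    (hlt : ∀ j, castSucc j < t → g j ≤ x) (hge : ∀ j, t ≤ castSucc j → x ≤ g j) :
    Monotone (insertNth t x g) := by
  intro a b hab
  induction a using succAboveCases t with
  | x =>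
    induction b using succAboveCases t with
    | x => rfl
    | p j =>
      rw [insertNth_apply_same, insertNth_apply_succAbove]
      exact hge j ((lt_succAbove_iff_le_castSucc t j).1 (hab.lt_of_ne (succAbove_ne t j).symm))
  | p i =>
    induction b using succAboveCases t with
    | x =>
      rw [insertNth_apply_same, insertNth_apply_succAbove]
      exact hlt i ((succAbove_lt_iff_castSucc_lt t i).1 (hab.lt_of_ne (succAbove_ne t i)))
    | p j =>
      rw [insertNth_apply_succAbove, insertNth_apply_succAbove]
      exact hg (succAbove_le_succAbove_iff.1 hab)

lemma Fin.monotone_cons {g : Fin n → α} (hg : Monotone g) {x : α} (hx : ∀ j, x ≤ g j) :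
    Monotone (cons x g : Fin (n + 1) → α) := by
  rw [← insertNth_zero']
  exact monotone_insertNth hg (fun j hj => absurd hj (not_lt_zero _)) (fun j _ => hx j)

end Tuples

section Counting

variable {m n : ℕ}

lemma mem_PK_iff {p : Fin n → ℕ} :
    p ∈ PK m n ↔ Monotone p ∧ ∀ i : Fin n, 1 ≤ p i ∧ p i ≤ m * i + 1 :=
  Set.Finite.mem_toFinset _

lemma apply_zero_of_mem_PK {p : Fin (n + 1) → ℕ} (hp : p ∈ PK m (n + 1)) : p 0 = 1 := by
  have := (mem_PK_iff.1 hp).2 0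
  simp only [val_zero, mul_zero, zero_add] at this
  omega

lemma freq_insertNth (j : ℕ) (t : Fin (n + 1)) (x : ℕ) (g : Fin n → ℕ) :
    freq j (insertNth t x g) = (if x = j then 1 else 0) + freq j g := by
  simp only [freq, card_filter, sum_univ_succAbove _ t, insertNth_apply_same,
    insertNth_apply_succAbove]

lemma freq_cons (j x : ℕ) (g : Fin n → ℕ) :
    freq j (cons x g : Fin (n + 1) → ℕ) = (if x = j then 1 else 0) + freq j g := by
  rw [← insertNth_zero', freq_insertNth]

lemma luck_eq_zero_iff_freq_one_eq_zero {p : Fin n → ℕ} (hp : p ∈ PK m n) :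
    luck m p = 0 ↔ freq 1 p = 0 := by
  cases n with
  | zero => simp [luck, freq]
  | succ n =>
    have h0 := apply_zero_of_mem_PK hp
    have hluck : 0 < luck m p := card_pos.2 ⟨0, by simp [h0]⟩
    have hfreq : 0 < freq 1 p := card_pos.2 ⟨0, by simp [h0]⟩
    omega

def jointCount (m n a b : ℕ) : ℕ :=
  ((PK m n).filter (fun p => luck m p = a ∧ freq 1 p = b)).card

lemma jointCount_zero_left (b : ℕ) : jointCount m n 0 b = jointCount m n b 0 := by
  refine congrArg card (filter_congr fun p hp => ?_)
  have := luck_eq_zero_iff_freq_one_eq_zero (m := m) hp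
  omega

end Counting

section FirstRise

variable {m N : ℕ}

/-- Indices `k ≥ N` qualify vacuously, so `firstRise m f ≤ N` once `N > 0`. For a parking
distribution with at least two lucky entries this is the position of the second one. -/
def firstRise (m : ℕ) {N : ℕ} (f : Fin N → ℕ) : ℕ :=
  sInf {k | 0 < k ∧ ∀ j : Fin N, (j : ℕ) = k → m * k < f j}

def IsFirstRise (m : ℕ) {N : ℕ} (f : Fin N → ℕ) (t : ℕ) : Prop :=
  0 < t ∧ t ≤ N ∧ (∀ j : Fin N, (j : ℕ) = t → m * t < f j) ∧
    ∀ j : Fin N, 0 < (j : ℕ) → (j : ℕ) < t → f j ≤ m * j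

lemma firstRise_le {f : Fin N → ℕ} {k : ℕ} (hk : 0 < k)
    (hrise : ∀ j : Fin N, (j : ℕ) = k → m * k < f j) : firstRise m f ≤ k :=
  Nat.sInf_le ⟨hk, hrise⟩

lemma isFirstRise_firstRise (hN0 : 0 < N) (f : Fin N → ℕ) :
    IsFirstRise m f (firstRise m f) := by
  have hN : firstRise m f ≤ N := firstRise_le hN0 fun j hj => absurd hj j.isLt.ne
  obtain ⟨hpos, hrise⟩ : firstRise m f ∈ {k | 0 < k ∧ ∀ j : Fin N, (j : ℕ) = k → m * k < f j} :=
    Nat.sInf_mem ⟨N, hN0, fun j hj => absurd hj j.isLt.ne⟩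
  refine ⟨hpos, hN, hrise, fun j hj hlt => ?_⟩
  by_contra hgt
  exact Nat.notMem_of_lt_sInf hlt ⟨hj, fun i hi => by rw [Fin.ext hi]; omega⟩

lemma IsFirstRise.firstRise_eq {f : Fin N → ℕ} {t : ℕ} (h : IsFirstRise m f t) :
    firstRise m f = t := by
  obtain ⟨ht, htN, hrise, hbelow⟩ := h
  refine le_antisymm (firstRise_le ht hrise) (not_lt.1 fun hlt => ?_)
  obtain ⟨hpos, -, hrise', -⟩ := isFirstRise_firstRise (m := m) (ht.trans_le htN) f
  have hgt : m * firstRise m f < f ⟨_, _⟩ := hrise' ⟨firstRise m f, by omega⟩ rfl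
  have hle : f ⟨_, _⟩ ≤ m * firstRise m f := hbelow ⟨firstRise m f, by omega⟩ hpos hlt
  omega

end FirstRise

section Transfer

variable {m n : ℕ} {g : Fin n → ℕ} {t : Fin (n + 1)}

lemma isFirstRise_insertNth (h : IsFirstRise m g t) :
    IsFirstRise m (insertNth t (m * t + 1) g) t := by
  obtain ⟨ht, -, -, hbelow⟩ := h
  refine ⟨ht, t.isLt.le, fun i hi => ?_, fun i hi hlt => ?_⟩
  · rw [Fin.ext hi, insertNth_apply_same]
    omega
  · induction i using succAboveCases t with
    | x => omega
    | p j =>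
      rw [insertNth_apply_succAbove]
      rw [val_succAbove] at hi hlt ⊢
      split_ifs at hi hlt ⊢ with hj
      · exact hbelow j hi hj
      · omega

lemma isFirstRise_removeNth {q : Fin (n + 1) → ℕ} (hq : Monotone q) (h : IsFirstRise m q t) :
    IsFirstRise m (removeNth t q) t := by
  obtain ⟨ht, -, hrise, hbelow⟩ := h
  refine ⟨ht, by omega, fun j hj => ?_, fun j hj hlt => ?_⟩
  · rw [removeNth, succAbove_of_le_castSucc _ _ (Fin.le_def.2 hj.ge)]
    exact (hrise t rfl).trans_le (hq (Fin.le_def.2 (by simp [hj])))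
  · rw [removeNth, succAbove_of_castSucc_lt _ _ (Fin.lt_def.2 hlt)]
    exact hbelow _ hj hlt

lemma insertNth_mem_PK (hp : (cons 1 g : Fin (n + 1) → ℕ) ∈ PK m (n + 1))
    (hg0 : ∀ j : Fin n, (j : ℕ) = 0 → g j = 1) (h : IsFirstRise m g t) :
    insertNth t (m * t + 1) g ∈ PK m (n + 1) := by
  obtain ⟨hmono, hbd⟩ := mem_PK_iff.1 hp
  obtain ⟨ht, htn, hrise, hbelow⟩ := h
  have hg : Monotone g := fun i j hij => by simpa using hmono (succ_le_succ_iff.2 hij)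
  have hgbd (j : Fin n) : 1 ≤ g j ∧ g j ≤ m * ((j : ℕ) + 1) + 1 := by simpa using hbd j.succ
  have hlow (j : Fin n) (hj : (j : ℕ) < t) : g j ≤ m * j + 1 := by
    rcases Nat.eq_zero_or_pos j with h0 | h0
    · simp [hg0 j h0]
    · have := hbelow j h0 hj
      omega
  refine mem_PK_iff.2 ⟨monotone_insertNth hg (fun j hj => ?_) (fun j hj => ?_), fun i => ?_⟩
  · replace hj : (j : ℕ) < t := by simpa [Fin.lt_def] using hj
    have := hlow j hj
    have := Nat.mul_le_mul_left m hj.le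
    omega
  · replace hj : (t : ℕ) ≤ j := by simpa [Fin.le_def] using hj
    calc m * t + 1 ≤ g ⟨t, by omega⟩ := hrise ⟨t, by omega⟩ rfl
      _ ≤ g j := hg (Fin.le_def.2 hj)
  · induction i using succAboveCases t with
    | x => simp
    | p j =>
      rw [insertNth_apply_succAbove, val_succAbove]
      split_ifs with hj
      · exact ⟨(hgbd j).1, hlow j hj⟩
      · exact hgbd j

lemma cons_removeNth_mem_PK {q : Fin (n + 1) → ℕ} (hq : q ∈ PK m (n + 1)) :
    (cons 1 (removeNth t q) : Fin (n + 1) → ℕ) ∈ PK m (n + 1) := by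
  obtain ⟨hmono, hbd⟩ := mem_PK_iff.1 hq
  refine mem_PK_iff.2 ⟨monotone_cons (hmono.comp (strictMono_succAbove t).monotone)
    (fun j => (hbd _).1), fun i => ?_⟩
  induction i using Fin.cases with
  | zero => simp
  | succ j =>
    have hle : (t.succAbove j : ℕ) ≤ j + 1 := by
      rw [val_succAbove]
      split_ifs <;> omega
    simp only [cons_succ, removeNth, val_succ]
    exact ⟨(hbd _).1, (hbd _).2.trans (by gcongr)⟩

lemma luck_insertNth (hm : 1 ≤ m) (hg0 : ∀ j : Fin n, (j : ℕ) = 0 → g j = 1)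
    (h : IsFirstRise m g t) :
    luck m (insertNth t (m * t + 1) g) = luck m (cons 1 g : Fin (n + 1) → ℕ) + 1 := by
  obtain ⟨ht, htn, -, hbelow⟩ := h
  have hn : 0 < n := by omega
  have hterm (j : Fin n) : (if g j = m * (t.succAbove j : ℕ) + 1 then 1 else 0) =
      (if g j = m * ((j : ℕ) + 1) + 1 then 1 else 0) + (if j = ⟨0, hn⟩ then 1 else 0) := by
    rw [val_succAbove]
    rcases Nat.eq_zero_or_pos (j : ℕ) with h0 | h0
    · obtain rfl : j = ⟨0, hn⟩ := Fin.ext h0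
      simp only [hg0 ⟨0, hn⟩ rfl, ht, ↓reduceIte, mul_zero, mul_one, zero_add]
      rw [if_neg (by omega)]
    · have hne : j ≠ ⟨0, hn⟩ := fun h => by simp [h] at h0
      simp only [hne, if_false, add_zero]
      by_cases hjt : (j : ℕ) < t
      · have := hbelow j h0 hjt
        have : m * (j : ℕ) < m * ((j : ℕ) + 1) := Nat.mul_lt_mul_of_pos_left (by omega) hm
        simp only [hjt, if_true]
        rw [if_neg (by omega), if_neg (by omega)]
      · simp only [hjt, if_false]
  rw [luck, luck, card_filter, card_filter, sum_univ_succAbove _ t, sum_univ_succ]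
  simp only [insertNth_apply_same, insertNth_apply_succAbove, cons_zero, cons_succ, val_zero,
    val_succ, hterm, sum_add_distrib, sum_ite_eq', mem_univ]
  simp only [if_true, mul_zero, zero_add]
  ring

lemma freq_one_insertNth (hm : 1 ≤ m) (h : IsFirstRise m g t) :
    freq 1 (insertNth t (m * t + 1) g) + 1 = freq 1 (cons 1 g : Fin (n + 1) → ℕ) := by
  have : m * t ≠ 0 := Nat.mul_ne_zero (by omega) h.1.ne'
  rw [freq_insertNth, freq_cons, if_neg (by omega), if_pos rfl]
  ring

end Transfer

section Bijection

variable {m n : ℕ}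

/-- On the sequences where it is used, `firstRise m (tail p) ≤ n`, so `Fin.ofNat` does not
wrap around. -/
def promote (m : ℕ) {n : ℕ} (p : Fin (n + 1) → ℕ) : Fin (n + 1) → ℕ :=
  insertNth (Fin.ofNat (n + 1) (firstRise m (tail p))) (m * firstRise m (tail p) + 1) (tail p)

def demote (m : ℕ) {n : ℕ} (q : Fin (n + 1) → ℕ) : Fin (n + 1) → ℕ :=
  cons 1 (removeNth (Fin.ofNat (n + 1) (firstRise m q)) q)

lemma promote_cons {g : Fin n → ℕ} {t : Fin (n + 1)} (h : IsFirstRise m g t) :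
    promote m (cons 1 g) = insertNth t (m * t + 1) g := by
  rw [promote, tail_cons, h.firstRise_eq, ofNat_val_eq_self]

lemma demote_insertNth {g : Fin n → ℕ} {t : Fin (n + 1)} (h : IsFirstRise m g t) :
    demote m (insertNth t (m * t + 1) g) = cons 1 g := by
  rw [demote, (isFirstRise_insertNth h).firstRise_eq, ofNat_val_eq_self, removeNth_insertNth]

lemma exists_cons_eq {p : Fin (n + 1) → ℕ} (hp : p ∈ PK m (n + 1)) (h2 : 2 ≤ freq 1 p) :
    ∃ (g : Fin n → ℕ) (t : Fin (n + 1)), (∀ j : Fin n, (j : ℕ) = 0 → g j = 1) ∧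
      IsFirstRise m g t ∧ cons 1 g = p := by
  obtain ⟨hmono, hbd⟩ := mem_PK_iff.1 hp
  have hp0 := apply_zero_of_mem_PK hp
  rw [← cons_self_tail p, hp0, freq_cons, if_pos rfl] at h2
  obtain ⟨j, hj⟩ : (univ.filter fun j => tail p j = 1).Nonempty :=
    card_pos.1 (by unfold freq at h2; omega)
  have hn : 0 < n := j.pos
  have hg0 (i : Fin n) (hi : (i : ℕ) = 0) : tail p i = 1 := by
    have hle : p i.succ ≤ p j.succ := hmono (succ_le_succ_iff.2 (Fin.le_def.2 (by omega)))
    have hj1 : p j.succ = 1 := (mem_filter.1 hj).2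
    have := (hbd i.succ).1
    show p i.succ = 1
    omega
  have h := isFirstRise_firstRise (m := m) hn (tail p)
  refine ⟨tail p, ⟨firstRise m (tail p), by have := h.2.1; omega⟩, hg0, h, ?_⟩
  conv_rhs => rw [← cons_self_tail p, hp0]

lemma exists_insertNth_eq {q : Fin (n + 1) → ℕ} (hq : q ∈ PK m (n + 1)) (h2 : 2 ≤ luck m q) :
    ∃ (g : Fin n → ℕ) (t : Fin (n + 1)), (∀ j : Fin n, (j : ℕ) = 0 → g j = 1) ∧
      IsFirstRise m g t ∧ insertNth t (m * t + 1) g = q := by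
  obtain ⟨hmono, hbd⟩ := mem_PK_iff.1 hq
  obtain ⟨k, hk, hk0⟩ := exists_mem_ne h2 0
  have hlucky : q k = m * k + 1 := (mem_filter.1 hk).2
  have hle : firstRise m q ≤ k :=
    firstRise_le (Fin.pos_of_ne_zero hk0) fun j hj => by rw [Fin.ext hj, hlucky]; omega
  have h := isFirstRise_firstRise (m := m) n.succ_pos q
  set t : Fin (n + 1) := ⟨firstRise m q, by omega⟩
  have ht : q t = m * t + 1 := le_antisymm (hbd t).2 (h.2.2.1 t rfl)
  refine ⟨removeNth t q, t, fun j hj => ?_, isFirstRise_removeNth hmono h, ?_⟩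
  · have hjt : castSucc j < t := show (j : ℕ) < firstRise m q by have := h.1; omega
    rw [removeNth, succAbove_of_castSucc_lt t j hjt,
      show castSucc j = 0 from Fin.ext hj, apply_zero_of_mem_PK hq]
  · rw [← ht, insertNth_self_removeNth]

lemma jointCount_succ_right {x y : ℕ} (hm : 1 ≤ m) (hx : 0 < x) (hy : 0 < y) :
    jointCount m n x (y + 1) = jointCount m n (x + 1) y := by
  cases n with
  | zero => simp [jointCount, luck, hx.ne]
  | succ n =>
    refine card_nbij' (promote m) (demote m) ?_ ?_ ?_ ?_
    · intro p hp
      obtain ⟨hpk, hl, hf⟩ := mem_filter.1 hp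
      obtain ⟨g, t, hg0, h, rfl⟩ := exists_cons_eq hpk (by omega)
      have := freq_one_insertNth hm h
      rw [promote_cons h]
      refine mem_filter.2 ⟨insertNth_mem_PK hpk hg0 h, ?_, by omega⟩
      rw [luck_insertNth hm hg0 h, hl]
    · intro q hq
      obtain ⟨hqk, hl, hf⟩ := mem_filter.1 hq
      obtain ⟨g, t, hg0, h, rfl⟩ := exists_insertNth_eq hqk (by omega)
      have := freq_one_insertNth hm h
      have := luck_insertNth hm hg0 h
      rw [demote_insertNth h]
      exact mem_filter.2 ⟨by simpa using cons_removeNth_mem_PK (t := t) hqk, by omega, by omega⟩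
    · intro p hp
      obtain ⟨hpk, -, hf⟩ := mem_filter.1 hp
      obtain ⟨g, t, -, h, rfl⟩ := exists_cons_eq hpk (by omega)
      rw [promote_cons h, demote_insertNth h]
    · intro q hq
      obtain ⟨hqk, hl, -⟩ := mem_filter.1 hq
      obtain ⟨g, t, -, h, rfl⟩ := exists_insertNth_eq hqk (by omega)
      rw [demote_insertNth h, promote_cons h]

lemma jointCount_eq_jointCount_one {x y : ℕ} (hm : 1 ≤ m) (hx : 0 < x) (hy : 0 < y) :
    jointCount m n x y = jointCount m n (x + y - 1) 1 := by
  induction y generalizing x with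
  | zero => omega
  | succ y ih =>
    rcases Nat.eq_zero_or_pos y with rfl | hy
    · simp
    · rw [jointCount_succ_right hm hx hy, ih (by omega) hy]
      congr 1
      omega

end Bijection

theorem stmt10 (m : ℕ) (hm : 1 ≤ m) (n a b : ℕ) :
    ((PK m n).filter (fun p => luck m p = a ∧ freq 1 p = b)).card =
      ((PK m n).filter (fun p => luck m p = b ∧ freq 1 p = a)).card := by
  change jointCount m n a b = jointCount m n b a
  rcases Nat.eq_zero_or_pos a with rfl | ha
  · exact jointCount_zero_left b
  rcases Nat.eq_zero_or_pos b with rfl | hb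
  · exact (jointCount_zero_left a).symm
  rw [jointCount_eq_jointCount_one hm ha hb, jointCount_eq_jointCount_one hm hb ha, add_comm]

end
end
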